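/- In two-color FLAG COLORING, the Grundy value of the properly 2-colored star graph S_i (one center vertex adjacent to i leaves) is: 0 if i = 0; 1 if i is odd; and 2 if i ≥ 2 is even. -/

import Mathlib

/-!
On a 2-colored star the game only depends on the set `D` of leaves colored unlike
the center. Recoloring the center merges everything into one color class, a terminal position;
recoloring a leaf of `D` just removes it from `D`. Hence the Grundy value `g m` for `|D| = m`
satisfies `g 0 = 0` and `g (m + 1) = mex {0, g m}`, which alternates `1, 2, 1, 2, …`.
-/

/-- The minimum excludant of a set of naturals. -/
noncomputable def mexN (S : Set ℕ) : ℕ := sInf {n | n ∉ S}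

namespace FlagColoring

variable {V : Type} {C : Type}

/-- The subgraph of `G` induced by the color class `c` of the coloring `f`
(as a graph on the same vertex set). -/
def colorSub (G : SimpleGraph V) (f : V → C) (c : C) : SimpleGraph V where
  Adj u w := G.Adj u w ∧ f u = c ∧ f w = c
  symm := ⟨fun _ _ h => ⟨G.symm.symm _ _ h.1, h.2.2, h.2.1⟩⟩
  loopless := ⟨fun u h => G.loopless.irrefl u h.1⟩

open Classical in
/-- One move of FLAG COLORING on the graph `G`: choose a vertex `v` and a color `c'`
different from the color `f v` of `v` and appearing on some neighbor of `v`, and recolor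
the whole connected monochromatic component of `v` (its component in the subgraph induced
by the vertices of color `f v`) with `c'`. -/
def Move (G : SimpleGraph V) (f g : V → C) : Prop :=
  ∃ v c', c' ≠ f v ∧ (∃ u, G.Adj v u ∧ f u = c') ∧
    g = fun w => if (colorSub G f (f v)).Reachable v w then c' else f w

open Classical in
/-- The number of ordered pairs of adjacent, differently colored vertices.
Every move strictly decreases this quantity, so it bounds the length of play. -/
noncomputable def boundary [Fintype V] (G : SimpleGraph V) (f : V → C) : ℕ :=
  (Finset.univ.filter (fun p : V × V => G.Adj p.1 p.2 ∧ f p.1 ≠ f p.2)).card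

/-- Grundy value computation with fuel. -/
noncomputable def grundyAux (G : SimpleGraph V) : ℕ → (V → C) → ℕ
  | 0, _ => 0
  | (n+1), f => mexN {k | ∃ g, Move G f g ∧ grundyAux G n g = k}

/-- The Grundy value (nimber) of the FLAG COLORING position `(G, f)`. Since every move
strictly decreases `boundary`, fuel `boundary G f + 1` suffices to compute the true
Grundy value: the mex of the Grundy values of the options (`0` if there are no options).
A position is a P-position exactly when its Grundy value is `0`. -/
noncomputable def grundy [Fintype V] (G : SimpleGraph V) (f : V → C) : ℕ :=
  grundyAux G (boundary G f + 1) f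

end FlagColoring

/-- The star graph `S i`: one central vertex (`none`) adjacent to `i` leaves. -/
def starGraph (i : ℕ) : SimpleGraph (Option (Fin i)) :=
  SimpleGraph.fromRel (fun u v => u = none ∧ v ≠ none)

/-- The proper 2-coloring of the star: the center gets one color, the leaves the other. -/
def starColor (i : ℕ) : Option (Fin i) → Bool := fun v => v.isNone

lemma mexN_eq_of_forall_lt_mem {S : Set ℕ} {k : ℕ} (hk : k ∉ S) (h : ∀ j < k, j ∈ S) :
    mexN S = k :=
  le_antisymm (Nat.sInf_le hk) (le_csInf ⟨k, hk⟩ fun _ hj => not_lt.1 fun hlt => hj (h _ hlt))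

lemma mexN_zero_pair (a : ℕ) : mexN {0, a} = if a = 1 then 2 else 1 := by
  split_ifs with ha
  · subst ha
    exact mexN_eq_of_forall_lt_mem (by simp) (by simp; omega)
  · exact mexN_eq_of_forall_lt_mem (by simp; omega) (by simp)

namespace FlagColoring

variable {V C : Type}

lemma grundyAux_eq_zero_of_forall_not_move {G : SimpleGraph V} {f : V → C}
    (h : ∀ g, ¬ Move G f g) (n : ℕ) : grundyAux G n f = 0 := by
  cases n with
  | zero => rfl
  | succ n =>
    rw [grundyAux]
    exact mexN_eq_of_forall_lt_mem (fun ⟨g, hg, _⟩ => h g hg) (by simp)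

lemma colorSub_color_eq_of_reachable {G : SimpleGraph V} {f : V → C} {c : C} {v w : V}
    (hvw : (colorSub G f c).Reachable v w) (hv : f v = c) : f w = c := by
  obtain ⟨p⟩ := hvw
  induction p with
  | nil => exact hv
  | cons ha _ ih => exact ih ha.2.2

lemma colorSub_reachable_iff_eq {G : SimpleGraph V} {f : V → C} {v w : V}
    (hv : ∀ u, G.Adj v u → f u ≠ f v) : (colorSub G f (f v)).Reachable v w ↔ w = v := by
  refine ⟨fun ⟨p⟩ => ?_, fun h => h ▸ SimpleGraph.Reachable.refl _⟩
  cases p with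
  | nil => rfl
  | cons ha _ => exact absurd ha.2.2 (hv _ ha.1)

open Classical in
noncomputable def recolorComponent (G : SimpleGraph V) (f : V → C) (v : V) (c : C) : V → C :=
  fun w => if (colorSub G f (f v)).Reachable v w then c else f w

lemma move_iff_of_bool {G : SimpleGraph V} {f g : V → Bool} :
    Move G f g ↔ ∃ v, (∃ u, G.Adj v u ∧ f u ≠ f v) ∧ g = recolorComponent G f v (!f v) := by
  constructor
  · rintro ⟨v, c, hc, ⟨u, hvu, rfl⟩, rfl⟩
    exact ⟨v, ⟨u, hvu, hc⟩, by rw [Bool.eq_not.2 hc]; rfl⟩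
  · rintro ⟨v, ⟨u, hvu, hu⟩, rfl⟩
    exact ⟨v, f u, hu, ⟨u, hvu, rfl⟩, by rw [Bool.eq_not.2 hu]; rfl⟩

end FlagColoring

open FlagColoring Finset

section Star

variable {i : ℕ}

lemma starGraph_adj {u w : Option (Fin i)} :
    (starGraph i).Adj u w ↔ (u = none ∧ w ≠ none) ∨ (u ≠ none ∧ w = none) := by
  simp only [starGraph, SimpleGraph.fromRel_adj]
  aesop

def diffLeaves (f : Option (Fin i) → Bool) : Finset (Fin i) :=
  univ.filter fun j => f (some j) ≠ f none

@[simp]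
lemma mem_diffLeaves {f : Option (Fin i) → Bool} {j : Fin i} :
    j ∈ diffLeaves f ↔ f (some j) ≠ f none := by
  simp [diffLeaves]

lemma diffLeaves_const (b : Bool) : diffLeaves (fun _ : Option (Fin i) => b) = ∅ := by
  ext; simp

lemma diffLeaves_update {f : Option (Fin i) → Bool} (j : Fin i) :
    diffLeaves (Function.update f (some j) (f none)) = (diffLeaves f).erase j := by
  ext k
  by_cases hk : k = j <;> simp [hk]

lemma diffLeaves_starColor (i : ℕ) : diffLeaves (starColor i) = univ := by
  ext; simp [starColor]

lemma starGraph_reachable_none_iff {f : Option (Fin i) → Bool} {w : Option (Fin i)} :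
    (colorSub (starGraph i) f (f none)).Reachable none w ↔ f w = f none := by
  refine ⟨fun h => colorSub_color_eq_of_reachable h rfl, fun hw => ?_⟩
  cases w with
  | none => exact SimpleGraph.Reachable.refl _
  | some j => exact SimpleGraph.Adj.reachable ⟨starGraph_adj.2 (.inl ⟨rfl, by simp⟩), rfl, hw⟩

lemma starGraph_reachable_some_iff {f : Option (Fin i) → Bool} {j : Fin i} {w : Option (Fin i)}
    (hj : j ∈ diffLeaves f) :
    (colorSub (starGraph i) f (f (some j))).Reachable (some j) w ↔ w = some j := by
  refine colorSub_reachable_iff_eq fun u hu => ?_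
  obtain rfl : u = none := by simpa using starGraph_adj.1 hu
  exact (mem_diffLeaves.1 hj).symm

lemma recolorComponent_starGraph_none (f : Option (Fin i) → Bool) :
    recolorComponent (starGraph i) f none (!f none) = fun _ => !f none := by
  funext w
  simp only [recolorComponent, starGraph_reachable_none_iff]
  split_ifs with hw
  · rfl
  · exact Bool.eq_not.2 hw

lemma recolorComponent_starGraph_some {f : Option (Fin i) → Bool} {j : Fin i}
    (hj : j ∈ diffLeaves f) :
    recolorComponent (starGraph i) f (some j) (!f (some j)) =
      Function.update f (some j) (f none) := by
  funext w
  simp only [recolorComponent, starGraph_reachable_some_iff hj, Function.update_apply]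
  split_ifs
  · exact (Bool.eq_not.2 (mem_diffLeaves.1 hj).symm).symm
  · rfl

lemma starGraph_move_iff {f g : Option (Fin i) → Bool} :
    Move (starGraph i) f g ↔
      ((diffLeaves f).Nonempty ∧ g = fun _ => !f none) ∨
        ∃ j ∈ diffLeaves f, g = Function.update f (some j) (f none) := by
  rw [move_iff_of_bool]
  constructor
  · rintro ⟨v | j, ⟨u, hvu, hu⟩, rfl⟩
    · obtain ⟨j, rfl⟩ : ∃ j, u = some j :=
        Option.ne_none_iff_exists'.1 (by simpa using starGraph_adj.1 hvu)
      exact .inl ⟨⟨j, mem_diffLeaves.2 hu⟩, recolorComponent_starGraph_none f⟩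
    · obtain rfl : u = none := by simpa using starGraph_adj.1 hvu
      have hj : j ∈ diffLeaves f := mem_diffLeaves.2 hu.symm
      exact .inr ⟨j, hj, recolorComponent_starGraph_some hj⟩
  · rintro (⟨⟨j, hj⟩, rfl⟩ | ⟨j, hj, rfl⟩)
    · exact ⟨none, ⟨some j, starGraph_adj.2 (.inl ⟨rfl, by simp⟩), mem_diffLeaves.1 hj⟩,
        (recolorComponent_starGraph_none f).symm⟩
    · exact ⟨some j, ⟨none, starGraph_adj.2 (.inr ⟨by simp, rfl⟩), (mem_diffLeaves.1 hj).symm⟩,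
        (recolorComponent_starGraph_some hj).symm⟩

def starGrundyValue (m : ℕ) : ℕ := if m = 0 then 0 else if m % 2 = 1 then 1 else 2

lemma starGrundyValue_succ (m : ℕ) : starGrundyValue (m + 1) = mexN {0, starGrundyValue m} := by
  rw [mexN_zero_pair]
  unfold starGrundyValue
  split_ifs <;> omega

lemma grundyAux_starGraph {f : Option (Fin i) → Bool} {n : ℕ} (hn : #(diffLeaves f) < n) :
    grundyAux (starGraph i) n f = starGrundyValue #(diffLeaves f) := by
  induction n generalizing f with
  | zero => omega
  | succ n ih =>
    cases hk : #(diffLeaves f) with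
    | zero =>
      refine grundyAux_eq_zero_of_forall_not_move (fun g hg => ?_) _
      simp [starGraph_move_iff, card_eq_zero.1 hk] at hg
    | succ k =>
      have hconst (b : Bool) : grundyAux (starGraph i) n (fun _ => b) = 0 := by
        rw [ih (by simp [diffLeaves_const]; omega), diffLeaves_const, card_empty]
        rfl
      have hleaf {j : Fin i} (hj : j ∈ diffLeaves f) :
          grundyAux (starGraph i) n (Function.update f (some j) (f none)) = starGrundyValue k := by
        have hcard : #(diffLeaves (Function.update f (some j) (f none))) = k := by
          rw [diffLeaves_update, card_erase_of_mem hj, hk, Nat.add_sub_cancel]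
        rw [ih (by omega), hcard]
      have hoptions : {v | ∃ g, Move (starGraph i) f g ∧ grundyAux (starGraph i) n g = v} =
          {0, starGrundyValue k} := by
        obtain ⟨j, hj⟩ := card_pos.1 (by rw [hk]; exact k.succ_pos)
        ext v
        simp only [Set.mem_ofPred_eq, starGraph_move_iff, Set.mem_insert_iff,
          Set.mem_singleton_iff]
        constructor
        · rintro ⟨g, ⟨-, rfl⟩ | ⟨j, hj, rfl⟩, rfl⟩
          · exact .inl (hconst _)
          · exact .inr (hleaf hj)
        · rintro (rfl | rfl)
          · exact ⟨_, .inl ⟨⟨j, hj⟩, rfl⟩, hconst _⟩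
          · exact ⟨_, .inr ⟨j, hj, rfl⟩, hleaf hj⟩
      rw [grundyAux, hoptions, starGrundyValue_succ]

lemma card_le_boundary_starColor (i : ℕ) : i ≤ boundary (starGraph i) (starColor i) := by
  calc i = #(univ : Finset (Fin i)) := by simp
    _ ≤ _ := card_le_card_of_injOn (fun j => (none, some j))
        (fun j _ => by simp [starGraph_adj, starColor])
        (fun a _ b _ h => by simpa using h)

end Star

/-- In two-color FLAG COLORING, the Grundy value of the properly 2-colored star graph
`S_i` is: 0 if `i = 0`; 1 if `i` is odd; 2 if `i ≥ 2` is even. -/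
theorem star_grundy (i : ℕ) :
    FlagColoring.grundy (starGraph i) (starColor i) =
      (if i = 0 then 0 else if i % 2 = 1 then 1 else 2) := by
  have hfuel : #(diffLeaves (starColor i)) < boundary (starGraph i) (starColor i) + 1 := by
    rw [diffLeaves_starColor, card_univ, Fintype.card_fin]
    exact Nat.lt_succ_of_le (card_le_boundary_starColor i)
  rw [grundy, grundyAux_starGraph hfuel, diffLeaves_starColor, card_univ, Fintype.card_fin]
  rfl
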